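/- arXiv:2502.17724 — 3 statements merged into one kernel-verified Lean document; each statement's English description precedes it below -/
import Mathlib

section
/- For a finite graph G with no isolated vertices, the average 1-level friendship bias admits the symmetrized representation (1/n)∑_i Δ_i = (1/(2n)) ∑_{(i,j): {i,j}∈E(G)} ( √(d_j/d_i) − √(d_i/d_j) )², where the sum runs over all ordered pairs of adjacent vertices, divided appropriately; in particular equality to zero holds if and only if d_i = d_j for every edge {i,j}. -/
/-!
Since `∑ j, A i j = d i`, the bias is `Δ i = ∑_{j ~ i} (d j / d i - 1)`. Summing over `i` and
averaging with the same sum taken over reversed edges gives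
`∑ i, Δ i = ½ ∑_{i ~ j} (d j / d i + d i / d j - 2)`, and for positive `x` one has
`x + x⁻¹ - 2 = (√x - √x⁻¹)²`. The right-hand side is a sum of squares, so it vanishes exactly
when `d i = d j` on every edge.
-/

open Finset

theorem Real.sq_sqrt_div_sub_sqrt_div {a b : ℝ} (ha : 0 < a) (hb : 0 < b) :
    (√(b / a) - √(a / b)) ^ 2 = (b / a - 1) + (a / b - 1) := by
  have hba : 0 ≤ b / a := by positivity
  have hinv : b / a * (a / b) = 1 := by field_simp
  rw [sub_sq, sq_sqrt hba, sq_sqrt (by positivity), mul_assoc, ← sqrt_mul hba, hinv, sqrt_one]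
  ring

theorem Real.sqrt_div_eq_sqrt_div_iff {a b : ℝ} (ha : 0 < a) (hb : 0 < b) :
    √(b / a) = √(a / b) ↔ a = b := by
  rw [sqrt_inj (by positivity) (by positivity), div_eq_div_iff ha.ne' hb.ne', eq_comm,
    mul_self_inj ha.le hb.le]

namespace SimpleGraph

variable {V : Type*} [Fintype V] (G : SimpleGraph V) [DecidableRel G.Adj]

/-- At an isolated vertex the division by `degree i = 0` makes this `0`, matching the empty
edge sum. -/
noncomputable def friendshipBias (i : V) : ℝ :=
  ∑ j, (G.adjMatrix ℝ i j / G.degree i) * G.degree j - G.degree i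

theorem sum_ite_adj_swap {M : Type*} [AddCommMonoid M] (f : V → V → M) :
    ∑ i, ∑ j, (if G.Adj i j then f j i else 0) = ∑ i, ∑ j, (if G.Adj i j then f i j else 0) := by
  rw [sum_comm]
  exact sum_congr rfl fun i _ => sum_congr rfl fun j _ => if_congr (G.adj_comm j i) rfl rfl

theorem friendshipBias_eq_sum_ite_adj (i : V) :
    G.friendshipBias i = ∑ j, if G.Adj i j then (G.degree j : ℝ) / G.degree i - 1 else 0 := by
  have hdeg : (G.degree i : ℝ) = ∑ j, G.adjMatrix ℝ i j := by
    rw [← card_neighborFinset_eq_degree, neighborFinset_eq_filter]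
    simp
  rw [friendshipBias, hdeg, ← sum_sub_distrib, ← hdeg]
  refine sum_congr rfl fun j _ => ?_
  by_cases h : G.Adj i j <;> simp [h, div_eq_inv_mul]

theorem sq_sqrt_degree_div_sub_eq_zero_iff {i j : V} (h : G.Adj i j) :
    (√(G.degree j / G.degree i : ℝ) - √(G.degree i / G.degree j : ℝ)) ^ 2 = 0 ↔
      G.degree i = G.degree j := by
  rw [pow_eq_zero_iff two_ne_zero, sub_eq_zero, Real.sqrt_div_eq_sqrt_div_iff, Nat.cast_inj]
  · exact_mod_cast h.degree_pos_left
  · exact_mod_cast h.degree_pos_right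

theorem two_mul_sum_friendshipBias :
    2 * ∑ i, G.friendshipBias i = ∑ i, ∑ j, if G.Adj i j then
      (√(G.degree j / G.degree i : ℝ) - √(G.degree i / G.degree j : ℝ)) ^ 2 else 0 := by
  have hsplit : ∀ i j, (if G.Adj i j then
      (√(G.degree j / G.degree i : ℝ) - √(G.degree i / G.degree j : ℝ)) ^ 2 else 0) =
      (if G.Adj i j then (G.degree j : ℝ) / G.degree i - 1 else 0) +
        (if G.Adj i j then (G.degree i : ℝ) / G.degree j - 1 else 0) := by
    intro i j
    split_ifs with h
    · exact Real.sq_sqrt_div_sub_sqrt_div (by exact_mod_cast h.degree_pos_left)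
        (by exact_mod_cast h.degree_pos_right)
    · simp
  simp only [hsplit, sum_add_distrib]
  rw [G.sum_ite_adj_swap fun i j => (G.degree j : ℝ) / G.degree i - 1, two_mul]
  simp only [friendshipBias_eq_sum_ite_adj]

theorem sum_friendshipBias_eq_zero_iff :
    ∑ i, G.friendshipBias i = 0 ↔ ∀ i j, G.Adj i j → G.degree i = G.degree j := by
  have hnonneg : ∀ i j, 0 ≤ (if G.Adj i j then
      (√(G.degree j / G.degree i : ℝ) - √(G.degree i / G.degree j : ℝ)) ^ 2 else 0) :=
    fun i j => by positivity
  rw [← mul_eq_zero_iff_left (two_ne_zero' ℝ), G.two_mul_sum_friendshipBias,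
    sum_eq_zero_iff_of_nonneg fun i _ => sum_nonneg fun j _ => hnonneg i j]
  simp only [sum_eq_zero_iff_of_nonneg fun j _ => hnonneg _ j, mem_univ, true_implies,
    ite_eq_right_iff]
  exact forall₂_congr fun i j => imp_congr_right G.sq_sqrt_degree_div_sub_eq_zero_iff

end SimpleGraph

theorem stmt_1_general (n : ℕ) (G : SimpleGraph (Fin n)) [DecidableRel G.Adj] :
    ((1 / (n : ℝ)) *
        ∑ i, ((∑ j, ((G.adjMatrix ℝ) i j / (G.degree i : ℝ)) * (G.degree j : ℝ))
          - (G.degree i : ℝ))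
      = (1 / (2 * (n : ℝ))) *
          ∑ i, ∑ j, (if G.Adj i j then
            (Real.sqrt ((G.degree j : ℝ) / (G.degree i : ℝ))
              - Real.sqrt ((G.degree i : ℝ) / (G.degree j : ℝ)))^2 else 0))
    ∧ ((1 / (n : ℝ)) *
        ∑ i, ((∑ j, ((G.adjMatrix ℝ) i j / (G.degree i : ℝ)) * (G.degree j : ℝ))
          - (G.degree i : ℝ)) = 0
        ↔ ∀ i j, G.Adj i j → G.degree i = G.degree j) := by
  change (1 / (n : ℝ)) * ∑ i, G.friendshipBias i = _ ∧
    ((1 / (n : ℝ)) * ∑ i, G.friendshipBias i = 0 ↔ _)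
  refine ⟨?_, ?_⟩
  · rw [← G.two_mul_sum_friendshipBias]
    ring
  · rw [← G.sum_friendshipBias_eq_zero_iff]
    rcases eq_or_ne n 0 with rfl | hn
    · simp
    · simp [hn]

theorem stmt_1 (n : ℕ) (hn : 1 ≤ n) (G : SimpleGraph (Fin n)) [DecidableRel G.Adj]
    (hdeg : ∀ i, 1 ≤ G.degree i) :
    ((1 / (n : ℝ)) *
        ∑ i, ((∑ j, ((G.adjMatrix ℝ) i j / (G.degree i : ℝ)) * (G.degree j : ℝ))
          - (G.degree i : ℝ))
      = (1 / (2 * (n : ℝ))) *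
          ∑ i, ∑ j, (if G.Adj i j then
            (Real.sqrt ((G.degree j : ℝ) / (G.degree i : ℝ))
              - Real.sqrt ((G.degree i : ℝ) / (G.degree j : ℝ)))^2 else 0))
    ∧ ((1 / (n : ℝ)) *
        ∑ i, ((∑ j, ((G.adjMatrix ℝ) i j / (G.degree i : ℝ)) * (G.degree j : ℝ))
          - (G.degree i : ℝ)) = 0
        ↔ ∀ i j, G.Adj i j → G.degree i = G.degree j) :=
  stmt_1_general n G
end

section
/- For a finite graph G with all degrees at least 1, and the simple random walk transition matrix P(i,j) = A_{ij}/d_i, for every k ∈ ℕ the average k-level friendship bias (1/n) ∑_i ( ∑_j P^k(i,j) d_j − d_i ) is nonnegative. -/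
/-!
The random walk is reversible with respect to the degrees: `d i * P i j = A i j = d j * P j i`,
and this detailed balance is inherited by every power `P ^ k`. Since `P ^ k` has row sums `1`,
the total bias is `∑ i j, (P ^ k) i j * (d j - d i)`, and pairing the `(i, j)` term with the
`(j, i)` term gives `(P ^ k) j i * (d j - d i) ^ 2 / d i ≥ 0`.
-/

open Finset

namespace Matrix

variable {ι R : Type*} [Fintype ι]

def IsReversible [Mul R] (Q : Matrix ι ι R) (π : ι → R) : Prop :=
  ∀ i j, π i * Q i j = π j * Q j i

theorem IsReversible.pow [DecidableEq ι] [CommSemiring R] {Q : Matrix ι ι R} {π : ι → R}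
    (hQ : Q.IsReversible π) (k : ℕ) : (Q ^ k).IsReversible π := by
  -- detailed balance is the matrix identity `D * Q = Qᵀ * D` for `D = diagonal π`
  have hsemiconj : SemiconjBy (diagonal π) Q Qᵀ := by
    ext i j
    simp [hQ i j, mul_comm]
  intro i j
  simpa [diagonal_mul, mul_diagonal, ← transpose_pow, mul_comm] using
    congrFun₂ (hsemiconj.pow_right k) i j

variable [Field R] [LinearOrder R] [IsStrictOrderedRing R]

theorem IsReversible.sum_mul_sub_nonneg {Q : Matrix ι ι R} {π : ι → R}
    (hQ : Q.IsReversible π) (hQ₀ : ∀ i j, 0 ≤ Q i j) (hπ : ∀ i, 0 < π i) :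
    0 ≤ ∑ i, ∑ j, Q i j * (π j - π i) := by
  have hpair : ∀ i j, 0 ≤ Q i j * (π j - π i) + Q j i * (π i - π j) := by
    intro i j
    have key :
        π i * (Q i j * (π j - π i) + Q j i * (π i - π j)) = Q j i * (π j - π i) ^ 2 := by
      linear_combination (π j - π i) * hQ i j
    exact (mul_nonneg_iff_of_pos_left (hπ i)).1 (key ▸ mul_nonneg (hQ₀ j i) (sq_nonneg _))
  have hswap : ∑ i, ∑ j, Q i j * (π j - π i) = ∑ i, ∑ j, Q j i * (π i - π j) := sum_comm
  have hsum := sum_nonneg fun i (_ : i ∈ univ) => sum_nonneg fun j (_ : j ∈ univ) => hpair i j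
  simp only [sum_add_distrib, ← hswap] at hsum
  linarith

theorem IsReversible.sum_sub_nonneg_of_mem_rowStochastic [DecidableEq ι]
    {Q : Matrix ι ι R} {π : ι → R}
    (hQ : Q.IsReversible π) (hstoch : Q ∈ rowStochastic R ι) (hπ : ∀ i, 0 < π i) :
    0 ≤ ∑ i, (∑ j, Q i j * π j - π i) := by
  have hrow (i : ι) : ∑ j, Q i j * π j - π i = ∑ j, Q i j * (π j - π i) := by
    simp only [mul_sub, sum_sub_distrib, ← sum_mul, sum_row_of_mem_rowStochastic hstoch, one_mul]
  simpa only [hrow] using hQ.sum_mul_sub_nonneg (fun _ _ => nonneg_of_mem_rowStochastic hstoch) hπ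

end Matrix

namespace SimpleGraph

variable {V : Type*} [Fintype V] (G : SimpleGraph V) [DecidableRel G.Adj]

noncomputable def randomWalkMatrix : Matrix V V ℝ :=
  Matrix.of fun i j => G.adjMatrix ℝ i j / G.degree i

theorem degree_mul_randomWalkMatrix (i j : V) :
    (G.degree i : ℝ) * G.randomWalkMatrix i j = G.adjMatrix ℝ i j := by
  by_cases hij : G.Adj i j
  · have hdeg : (G.degree i : ℝ) ≠ 0 :=
      Nat.cast_ne_zero.2 (G.degree_pos_iff_exists_adj i |>.2 ⟨j, hij⟩).ne'
    simp [randomWalkMatrix, mul_div_cancel₀ _ hdeg]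
  · simp [randomWalkMatrix, hij]

theorem randomWalkMatrix_isReversible :
    G.randomWalkMatrix.IsReversible fun i => (G.degree i : ℝ) := by
  intro i j
  rw [degree_mul_randomWalkMatrix, degree_mul_randomWalkMatrix, G.isSymm_adjMatrix.apply]

theorem randomWalkMatrix_mem_rowStochastic [DecidableEq V] (hdeg : ∀ i, G.degree i ≠ 0) :
    G.randomWalkMatrix ∈ Matrix.rowStochastic ℝ V := by
  refine Matrix.mem_rowStochastic_iff_sum.2 ⟨fun i j => ?_, fun i => ?_⟩
  · simp only [randomWalkMatrix, Matrix.of_apply, adjMatrix_apply]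
    positivity
  · simp only [randomWalkMatrix, Matrix.of_apply, ← sum_div]
    rw [div_eq_one_iff_eq (Nat.cast_ne_zero.2 (hdeg i))]
    simp [adjMatrix_apply, sum_boole, ← card_neighborFinset_eq_degree, neighborFinset_eq_filter]

end SimpleGraph

theorem stmt_2 (n : ℕ) (G : SimpleGraph (Fin n)) [DecidableRel G.Adj]
    (hdeg : ∀ i, 1 ≤ G.degree i) (k : ℕ)
    (P : Matrix (Fin n) (Fin n) ℝ)
    (hP : ∀ i j, P i j = (G.adjMatrix ℝ) i j / (G.degree i : ℝ)) :
    0 ≤ (1 / (n : ℝ)) *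
        ∑ i, ((∑ j, (P ^ k) i j * (G.degree j : ℝ)) - (G.degree i : ℝ)) := by
  obtain rfl : P = G.randomWalkMatrix := Matrix.ext hP
  have hstoch := Submonoid.pow_mem _
    (G.randomWalkMatrix_mem_rowStochastic fun i => Nat.one_le_iff_ne_zero.1 (hdeg i)) k
  have hbias := (G.randomWalkMatrix_isReversible.pow k).sum_sub_nonneg_of_mem_rowStochastic hstoch
    fun i => Nat.cast_pos.2 (hdeg i)
  exact mul_nonneg (by positivity) hbias
end

section
/- Let G be a finite simple graph in which every connected component is bipartite and bi-regular. Then for every even k ∈ ℕ, the k-level friendship bias of every vertex under the simple random walk is zero: ∑_j P^k(i,j) d_j = d_i for all i. -/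
/-! Let `d` be the degree vector. On a bi-regular bipartite component all neighbours of a vertex
lie on the other side and share one degree, so `P *ᵥ d` is constant on each side with the value
of the opposite side; applying `P` once more returns `d`. Hence `P ^ 2` fixes `d`, and so does
every even power. -/

open Matrix

section RandomWalk

variable {V : Type*} [Fintype V] (G : SimpleGraph V) [DecidableRel G.Adj]

theorem randomWalk_mulVec_apply_of_forall_adj {P : Matrix V V ℝ}
    (hP : ∀ i j, P i j = G.adjMatrix ℝ i j / (G.degree i : ℝ)) {i : V} (hi : 1 ≤ G.degree i)
    {x : V → ℝ} {c : ℝ} (hx : ∀ j, G.Adj i j → x j = c) : (P *ᵥ x) i = c := by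
  have hdi : (G.degree i : ℝ) ≠ 0 := by positivity
  calc (P *ᵥ x) i = (G.adjMatrix ℝ *ᵥ x) i / G.degree i := by
        simp only [mulVec, dotProduct, hP, div_mul_eq_mul_div, Finset.sum_div]
    _ = (∑ j ∈ G.neighborFinset i, c) / G.degree i := by
        rw [SimpleGraph.adjMatrix_mulVec_apply]
        congr 1
        exact Finset.sum_congr rfl fun j hj => hx j ((G.mem_neighborFinset i j).mp hj)
    _ = c := by
        rw [Finset.sum_const, SimpleGraph.card_neighborFinset_eq_degree, nsmul_eq_mul,
          mul_div_cancel_left₀ c hdi]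

theorem degree_eq_of_adj_of_adj {side : V → Bool} (hbip : ∀ i j, G.Adj i j → side i ≠ side j)
    (hbireg : ∀ i j, G.Reachable i j → side i = side j → G.degree i = G.degree j)
    {i j l : V} (hij : G.Adj i j) (hjl : G.Adj j l) : G.degree l = G.degree i := by
  have hside : side i = side l := by
    have h₁ := hbip i j hij
    have h₂ := hbip j l hjl
    revert h₁ h₂
    cases side i <;> cases side j <;> cases side l <;> decide
  exact (hbireg i l (hij.reachable.trans hjl.reachable) hside).symm

end RandomWalk

theorem Matrix.pow_mulVec_eq_self_of_even {V R : Type*} [Fintype V] [DecidableEq V] [CommSemiring R]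
    {M : Matrix V V R} {x : V → R} (hx : M *ᵥ (M *ᵥ x) = x) {k : ℕ} (hk : Even k) :
    M ^ k *ᵥ x = x := by
  obtain ⟨m, rfl⟩ := hk
  induction m with
  | zero => simp
  | succ m ih =>
    rw [show m + 1 + (m + 1) = m + m + 2 by omega, pow_add, ← mulVec_mulVec, sq,
      ← mulVec_mulVec, hx, ih]

theorem stmt_16 (n : ℕ) (G : SimpleGraph (Fin n)) [DecidableRel G.Adj]
    (hdeg : ∀ i, 1 ≤ G.degree i)
    (side : Fin n → Bool) (hbip : ∀ i j, G.Adj i j → side i ≠ side j)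
    (hbireg : ∀ i j, G.Reachable i j → side i = side j → G.degree i = G.degree j)
    (P : Matrix (Fin n) (Fin n) ℝ)
    (hP : ∀ i j, P i j = (G.adjMatrix ℝ) i j / (G.degree i : ℝ)) :
    ∀ k : ℕ, Even k → ∀ i, ∑ j, (P ^ k) i j * (G.degree j : ℝ) = (G.degree i : ℝ) := by
  set d : Fin n → ℝ := fun j => G.degree j
  have hd : P *ᵥ (P *ᵥ d) = d := by
    funext i
    refine randomWalk_mulVec_apply_of_forall_adj G hP (hdeg i) fun j hij => ?_
    exact randomWalk_mulVec_apply_of_forall_adj G hP (hdeg j) fun l hjl => by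
      simp only [d, degree_eq_of_adj_of_adj G hbip hbireg hij hjl]
  intro k hk i
  exact congrFun (pow_mulVec_eq_self_of_even hd hk) i
end
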